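/- Assuming (a) for all finite $S$, $I(S) \le \alpha H(S) + O(\log H(S))$ with $\alpha \ge 1$, and (b) the Main Lemma (for every rational $\varepsilon \in (0,1)$ there is a bound $l(\varepsilon) = 2^{\alpha \log_2(1/\varepsilon) + O(\log\log(1/\varepsilon))}$ such that every set $S$ with enumeration probability $> \varepsilon$ and every finite $S' \subseteq S$ admit a set $X$ with $S' \subseteq X \subseteq S$ entered by one of the first $l(\varepsilon)$ cats that stays within $S$), it follows that for every (possibly infinite) $S$, $I(S) \le \alpha H(S) + O(\log H(S))$. -/
import Mathlib


open MeasureTheory ENNReal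

/-- The transfer theorem (Theorem 3 of the paper), derived from the Main Lemma.

Setting: `μ` is the fair-coin measure on Cantor space, `M` is an optimal probabilistic
enumerating machine, and `Dstep x t` is the finite set output by the universal deterministic
machine on input `x` within `t` steps (so the "cat" `x` enumerates `⋃ t, Dstep x t`).
`-log₂ μ {ω | M ω = S}` is `H(S)` and the length of a witnessing input is `I(S)`.

Hypothesis (a): for every finite `S` with positive enumeration probability there is an input of
length at most `α·H(S) + O(log H(S))` enumerating `S`.

Hypothesis (b) (Main Lemma): there is a constant `C` such that for every `k ≥ 1`
(`ε = 2^{-k}`), every `S` with enumeration probability `> ε`, and every finite `S' ⊆ S`, some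
input `x` of length at most `α·k + C·log k + C` (i.e. one of the first
`l(ε) = 2^{α log₂(1/ε) + O(log log (1/ε))}` cats), whose output always stays inside `S`, enters a
vertex `X` with `S' ⊆ X ⊆ S`.

Conclusion: for every (possibly infinite) `S`, `I(S) ≤ α·H(S) + O(log H(S))`. -/
theorem transfer_finite_to_infinite
    (μ : Measure (ℕ → Bool)) [IsProbabilityMeasure μ]
    (M : (ℕ → Bool) → Set ℕ)
    (Dstep : List Bool → ℕ → Finset ℕ)
    (hmono : ∀ x, Monotone (Dstep x))
    (α : ℝ) (hα : 1 ≤ α)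
    (ha : ∃ c : ℝ, 0 ≤ c ∧ ∀ S : Set ℕ, S.Finite →
      0 < μ {ω | M ω = S} →
      ∃ x : List Bool, (⋃ t, (Dstep x t : Set ℕ)) = S ∧
        (x.length : ℝ) ≤ α * (-Real.logb 2 (μ {ω | M ω = S}).toReal) +
          c * Real.logb 2 (-Real.logb 2 (μ {ω | M ω = S}).toReal + 2) + c)
    (hb : ∃ C : ℝ, 0 ≤ C ∧ ∀ k : ℕ, 1 ≤ k → ∀ S : Set ℕ,
      (2 : ℝ≥0∞)⁻¹ ^ k < μ {ω | M ω = S} →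
      ∀ S' : Finset ℕ, (S' : Set ℕ) ⊆ S →
      ∃ x : List Bool, (x.length : ℝ) ≤ α * k + C * Real.logb 2 ((k : ℝ) + 1) + C ∧
        (∀ t, (Dstep x t : Set ℕ) ⊆ S) ∧
        ∃ X : Finset ℕ, (S' : Set ℕ) ⊆ (X : Set ℕ) ∧ (X : Set ℕ) ⊆ S ∧
          ∃ t, Dstep x t = X) :
    ∃ c : ℝ, 0 ≤ c ∧ ∀ S : Set ℕ, 0 < μ {ω | M ω = S} →
      ∃ x : List Bool, (⋃ t, (Dstep x t : Set ℕ)) = S ∧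
        (x.length : ℝ) ≤ α * (-Real.logb 2 (μ {ω | M ω = S}).toReal) +
          c * Real.logb 2 (-Real.logb 2 (μ {ω | M ω = S}).toReal + 2) + c := by
  classical
  obtain ⟨ca, hca0, hca⟩ := ha
  obtain ⟨C, hC0, hC⟩ := hb
  refine ⟨ca + 2 * α + 2 * C, by positivity, ?_⟩
  intro S hp
  set p : ℝ≥0∞ := μ {ω | M ω = S} with hpdef
  have hpt : p ≠ ⊤ := (lt_of_le_of_lt prob_le_one (lt_top_iff_ne_top.mpr one_ne_top)).ne
  have hpt1 : p.toReal ≤ 1 := by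
    simpa using ENNReal.toReal_mono one_ne_top prob_le_one
  have hpt0 : 0 < p.toReal := ENNReal.toReal_pos hp.ne' hpt
  set H : ℝ := -Real.logb 2 p.toReal with hHdef
  have hH0 : 0 ≤ H := by
    have := Real.logb_nonpos one_lt_two hpt0.le hpt1
    simpa [hHdef] using neg_nonneg.mpr this
  have hlog1 : (1 : ℝ) ≤ Real.logb 2 (H + 2) := by
    have : Real.logb 2 2 ≤ Real.logb 2 (H + 2) :=
      Real.logb_le_logb_of_le one_lt_two (by norm_num) (by linarith)
    simpa using this
  by_cases hfin : S.Finite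
  · obtain ⟨x, hx1, hx2⟩ := hca S hfin hp
    refine ⟨x, hx1, le_trans hx2 ?_⟩
    have h1 : ca * Real.logb 2 (H + 2) ≤ (ca + 2 * α + 2 * C) * Real.logb 2 (H + 2) := by
      apply mul_le_mul_of_nonneg_right _ (by linarith)
      linarith
    simp only [← hpdef, ← hHdef]
    nlinarith [hlog1]
  · -- infinite case
    set k : ℕ := ⌈H⌉₊ + 1 with hkdef
    have hk1 : 1 ≤ k := Nat.le_add_left 1 _
    have hkH : H < (k : ℝ) := by
      have := Nat.le_ceil H
      push_cast [hkdef]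
      linarith
    have hkH2 : (k : ℝ) ≤ H + 2 := by
      have := Nat.ceil_lt_add_one hH0
      push_cast [hkdef]
      linarith
    have hlt : (2 : ℝ≥0∞)⁻¹ ^ k < p := by
      rw [← ENNReal.toReal_lt_toReal (by simp) hpt]
      have h2 : ((2 : ℝ≥0∞)⁻¹ ^ k).toReal = (2 : ℝ) ^ (-(k : ℝ)) := by
        rw [Real.rpow_neg (by norm_num), Real.rpow_natCast]
        simp [ENNReal.toReal_pow]
      rw [h2]
      have : (2 : ℝ) ^ (-(k : ℝ)) < (2 : ℝ) ^ (Real.logb 2 p.toReal) := by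
        apply Real.rpow_lt_rpow_left_iff (by norm_num : (1:ℝ) < 2) |>.mpr
        rw [hHdef] at hkH
        linarith
      rwa [Real.rpow_logb (by norm_num) (by norm_num) hpt0] at this
    -- finite approximations
    set S' : ℕ → Finset ℕ := fun n => (Finset.range n).filter (· ∈ S) with hS'def
    have hS'sub : ∀ n, ((S' n : Set ℕ)) ⊆ S := by
      intro n a ha
      simp only [hS'def, Finset.coe_filter, Set.mem_setOf_eq] at ha
      exact ha.2
    have hS'mono : ∀ {n m : ℕ}, n ≤ m → S' n ⊆ S' m := fun h =>
      Finset.filter_subset_filter _ (Finset.range_subset_range.mpr h)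
    have hmem : ∀ a ∈ S, a ∈ S' (a + 1) := by
      intro a ha
      simp [hS'def, ha]
    choose f hf1 hf2 hf3 using fun n => hC k hk1 S hlt (S' n) (hS'sub n)
    -- pigeonhole
    set L : ℝ := α * k + C * Real.logb 2 ((k : ℝ) + 1) + C with hLdef
    set N : ℕ := ⌈L⌉₊ with hNdef
    have hflen : ∀ n, (f n).length ≤ N := by
      intro n
      have := (hf1 n).trans (Nat.le_ceil L)
      exact_mod_cast this
    have hfinT : Finite {l : List Bool // l.length ≤ N} :=
      (List.finite_length_le Bool N).to_subtype
    obtain ⟨x₀, hx₀⟩ := Finite.exists_infinite_fiber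
      (fun n => (⟨f n, hflen n⟩ : {l : List Bool // l.length ≤ N}))
    have hfib : {n : ℕ | f n = (x₀ : List Bool)}.Infinite := by
      rw [← Set.infinite_coe_iff]
      have heq : (fun n => (⟨f n, hflen n⟩ : {l : List Bool // l.length ≤ N})) ⁻¹' {x₀}
          = {n : ℕ | f n = (x₀ : List Bool)} := by
        ext n; simp [Subtype.ext_iff]
      rwa [heq] at hx₀
    obtain ⟨n₀, hn₀, _⟩ := hfib.exists_gt 0
    refine ⟨x₀, ?_, ?_⟩
    · apply Set.Subset.antisymm
      · apply Set.iUnion_subset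
        intro t
        rw [← hn₀]
        exact hf2 n₀ t
      · intro a ha
        obtain ⟨m, hm, hma⟩ := hfib.exists_gt (a + 1)
        obtain ⟨X, hX1, hX2, t, hX3⟩ := hf3 m
        have : a ∈ X := hX1 (by
          have : a ∈ S' m := hS'mono (le_of_lt hma) (hmem a ha)
          exact_mod_cast this)
        rw [← hX3] at this
        rw [hm] at this
        exact Set.mem_iUnion.mpr ⟨t, this⟩
    · have hlen : ((x₀ : List Bool).length : ℝ) ≤ L := by rw [← hn₀]; exact hf1 n₀
      refine hlen.trans ?_
      have hlogk : Real.logb 2 ((k : ℝ) + 1) ≤ Real.logb 2 (H + 2) + 1 := by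
        have h1 : Real.logb 2 ((k : ℝ) + 1) ≤ Real.logb 2 (2 * (H + 2)) :=
          Real.logb_le_logb_of_le one_lt_two (by positivity) (by linarith)
        have h2 : Real.logb 2 (2 * (H + 2)) = 1 + Real.logb 2 (H + 2) := by
          rw [Real.logb_mul (by norm_num) (by linarith)]
          simp
        linarith
      have hαk : α * k ≤ α * H + 2 * α := by nlinarith
      have hCk : C * Real.logb 2 ((k : ℝ) + 1) ≤ C * Real.logb 2 (H + 2) + C := by
        nlinarith
      simp only [← hpdef, ← hHdef, hLdef]
      nlinarith [hlog1, mul_le_mul_of_nonneg_right (le_refl ca) (le_trans zero_le_one hlog1)]
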